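/- If K_{n+l,2n} with n = l+3 has an interval total t-coloring α with 2n+1 ≤ t ≤ 2n+l, then for every vertex v, the interval [n, n+l+1] is contained in S[v,α], the set of colors on v and its incident edges. -/

import Mathlib

namespace ITC

variable {V : Type*}

/-- A total coloring: proper on vertices, edges, and incident vertex-edge pairs. -/
def IsTotalColoring (G : SimpleGraph V) (cv : V → ℕ) (ce : Sym2 V → ℕ) : Prop :=
  (∀ u v, G.Adj u v → cv u ≠ cv v) ∧
  (∀ e f, e ∈ G.edgeSet → f ∈ G.edgeSet → e ≠ f → (∃ w, w ∈ e ∧ w ∈ f) → ce e ≠ ce f) ∧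
  (∀ v e, e ∈ G.edgeSet → v ∈ e → cv v ≠ ce e)

/-- The set of colors on a vertex `v` together with its incident edges. -/
def palette (G : SimpleGraph V) (cv : V → ℕ) (ce : Sym2 V → ℕ) (v : V) : Set ℕ :=
  insert (cv v) {c | ∃ e ∈ G.edgeSet, v ∈ e ∧ ce e = c}

/-- Degree of a vertex. -/
noncomputable def deg (G : SimpleGraph V) (v : V) : ℕ := (G.neighborSet v).ncard

/-- An interval total `t`-coloring. -/
def IsIntervalTotalColoring (G : SimpleGraph V) (t : ℕ) (cv : V → ℕ)
    (ce : Sym2 V → ℕ) : Prop :=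
  IsTotalColoring G cv ce ∧
  (∀ v, cv v ∈ Set.Icc 1 t) ∧ (∀ e ∈ G.edgeSet, ce e ∈ Set.Icc 1 t) ∧
  (∀ c ∈ Set.Icc 1 t, (∃ v, cv v = c) ∨ (∃ e ∈ G.edgeSet, ce e = c)) ∧
  (∀ v, ∃ a, palette G cv ce v = Set.Icc a (a + deg G v))

def HasIntervalTotalColoring (G : SimpleGraph V) (t : ℕ) : Prop :=
  ∃ cv ce, IsIntervalTotalColoring G t cv ce

/-- Minimum span of interval total colorings. -/
noncomputable def wtau (G : SimpleGraph V) : ℕ := sInf {t | HasIntervalTotalColoring G t}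

/-- Maximum span of interval total colorings. -/
noncomputable def Wtau (G : SimpleGraph V) : ℕ := sSup {t | HasIntervalTotalColoring G t}

/-- Total chromatic number: least `k` such that there is a total coloring
with colors in `{1, …, k}`. -/
noncomputable def totalChromaticNumber (G : SimpleGraph V) : ℕ :=
  sInf {k | ∃ cv ce, IsTotalColoring G cv ce ∧ (∀ v, cv v ∈ Set.Icc 1 k) ∧
    ∀ e ∈ G.edgeSet, ce e ∈ Set.Icc 1 k}

/-- A proper edge coloring. -/
def IsProperEdgeColoring (G : SimpleGraph V) (ce : Sym2 V → ℕ) : Prop :=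
  ∀ e f, e ∈ G.edgeSet → f ∈ G.edgeSet → e ≠ f → (∃ w, w ∈ e ∧ w ∈ f) → ce e ≠ ce f

/-- Colors appearing on the edges incident to `v`. -/
def edgePalette (G : SimpleGraph V) (ce : Sym2 V → ℕ) (v : V) : Set ℕ :=
  {c | ∃ e ∈ G.edgeSet, v ∈ e ∧ ce e = c}

/-- An interval (edge) `t`-coloring. -/
def IsIntervalEdgeColoring (G : SimpleGraph V) (t : ℕ) (ce : Sym2 V → ℕ) : Prop :=
  IsProperEdgeColoring G ce ∧
  (∀ e ∈ G.edgeSet, ce e ∈ Set.Icc 1 t) ∧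
  (∀ c ∈ Set.Icc 1 t, ∃ e ∈ G.edgeSet, ce e = c) ∧
  (∀ v, ∃ a, edgePalette G ce v = Set.Icc (a + 1) (a + deg G v))

/-- The hypercube `Q_n`. -/
def hypercube (n : ℕ) : SimpleGraph (Fin n → Bool) where
  Adj u v := ∃! i, u i ≠ v i
  symm := by
    constructor
    rintro u v ⟨i, hi, hu⟩
    exact ⟨i, Ne.symm hi, fun j hj => hu j (Ne.symm hj)⟩
  loopless := by
    constructor
    rintro u ⟨i, hi, -⟩
    exact hi rfl

/-- The complete graph on `Fin (2*r)` minus the perfect matching joining `i` and `i+r`. -/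
def Kminus (r : ℕ) : SimpleGraph (Fin (2 * r)) where
  Adj i j := i ≠ j ∧ ¬((i : ℕ) + r = (j : ℕ) ∨ (j : ℕ) + r = (i : ℕ))
  symm := by
    constructor
    rintro i j ⟨h1, h2⟩
    exact ⟨h1.symm, fun h => h2 h.symm⟩
  loopless := by
    constructor
    rintro i ⟨h1, -⟩
    exact h1 rfl

/-- Blow up each vertex of `H` into a copy of `β` (no edges inside copies). -/
def blowup {α : Type*} (H : SimpleGraph α) (β : Type*) : SimpleGraph (α × β) where
  Adj u v := H.Adj u.1 v.1
  symm := by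
    constructor
    exact fun _ _ h => H.adj_symm h
  loopless := by
    constructor
    exact fun u h => H.irrefl h

lemma palette_subset_Icc {G : SimpleGraph V} {t : ℕ} {cv : V → ℕ} {ce : Sym2 V → ℕ}
    (hα : IsIntervalTotalColoring G t cv ce) (v : V) : palette G cv ce v ⊆ Set.Icc 1 t := by
  rintro c (rfl | ⟨e, he, -, rfl⟩)
  exacts [hα.2.1 v, hα.2.2.1 e he]

lemma Icc_subset_palette {G : SimpleGraph V} {t : ℕ} {cv : V → ℕ} {ce : Sym2 V → ℕ}
    (hα : IsIntervalTotalColoring G t cv ce) (v : V) :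
    Set.Icc (t - deg G v) (deg G v + 1) ⊆ palette G cv ce v := by
  obtain ⟨a, ha⟩ := hα.2.2.2.2 v
  have hrange := palette_subset_Icc hα v
  rw [ha] at hrange ⊢
  have hlo := (hrange (Set.left_mem_Icc.2 (Nat.le_add_right a _))).1
  have hhi := (hrange (Set.right_mem_Icc.2 (Nat.le_add_right a _))).2
  exact Set.Icc_subset_Icc (by omega) (by omega)

lemma deg_completeBipartiteGraph_inl {W : Type*} (a : V) :
    deg (completeBipartiteGraph V W) (Sum.inl a) = Nat.card W := by
  have hN : (completeBipartiteGraph V W).neighborSet (Sum.inl a) = Set.range Sum.inr := by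
    ext w
    cases w <;> simp
  rw [deg, hN, Set.ncard_range_of_injective Sum.inr_injective]

lemma deg_completeBipartiteGraph_inr {W : Type*} (b : W) :
    deg (completeBipartiteGraph V W) (Sum.inr b) = Nat.card V := by
  have hN : (completeBipartiteGraph V W).neighborSet (Sum.inr b) = Set.range Sum.inl := by
    ext w
    cases w <;> simp
  rw [deg, hN, Set.ncard_range_of_injective Sum.inl_injective]

theorem stmt4_general (l n t : ℕ) (hn : n = l + 3)
    (cv : (Fin (n + l) ⊕ Fin (2 * n)) → ℕ) (ce : Sym2 (Fin (n + l) ⊕ Fin (2 * n)) → ℕ)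
    (hα : IsIntervalTotalColoring (completeBipartiteGraph (Fin (n + l)) (Fin (2 * n))) t cv ce)
    (ht2 : t ≤ 2 * n + l) :
    ∀ v, Set.Icc n (n + l + 1) ⊆
      palette (completeBipartiteGraph (Fin (n + l)) (Fin (2 * n))) cv ce v := by
  intro v
  have hdeg : deg (completeBipartiteGraph (Fin (n + l)) (Fin (2 * n))) v = 2 * n ∨
      deg (completeBipartiteGraph (Fin (n + l)) (Fin (2 * n))) v = n + l := by
    cases v <;> simp [deg_completeBipartiteGraph_inl, deg_completeBipartiteGraph_inr]
  exact (Set.Icc_subset_Icc (by omega) (by omega)).trans (Icc_subset_palette hα v)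

theorem stmt4 (l n t : ℕ) (hl : 0 < l) (hn : n = l + 3)
    (cv : (Fin (n + l) ⊕ Fin (2 * n)) → ℕ) (ce : Sym2 (Fin (n + l) ⊕ Fin (2 * n)) → ℕ)
    (hα : IsIntervalTotalColoring (completeBipartiteGraph (Fin (n + l)) (Fin (2 * n))) t cv ce)
    (ht1 : 2 * n + 1 ≤ t) (ht2 : t ≤ 2 * n + l) :
    ∀ v, Set.Icc n (n + l + 1) ⊆
      palette (completeBipartiteGraph (Fin (n + l)) (Fin (2 * n))) cv ce v :=
  stmt4_general l n t hn cv ce hα ht2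

end ITC
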